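/- arXiv:1312.0416 — 3 statements merged into one kernel-verified Lean document; each statement's English description precedes it below -/
import Mathlib

section
/- Let X = (X_1,…,X_n) be a real, centered, weakly stationary Gaussian (or more generally second-order) process whose autocovariance has spectral density f, i.e. Cov(X_j, X_k) = (1/2π)∫_{−π}^{π} e^{i(j−k)λ} f(λ) dλ with f even and nonnegative. Then the smallest eigenvalue of the covariance matrix Cov(X) satisfies λ_min(Cov(X)) ≥ (1 − 1/π) · inf_{λ ∈ [1/n, π]} f(λ). -/
/-!
Writing `G v λ = |∑ₖ vₖ e^{ikλ}|²`, evenness of `f` turns the quadratic form of the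
covariance matrix into `vᵀ C v = (1/π) ∫₀^π G v λ f(λ) dλ`. Orthogonality of the
characters gives `∫₀^π G v = π ‖v‖²`, while Cauchy–Schwarz gives `G v ≤ n ‖v‖²`, so `G v`
carries at most `‖v‖²` of its mass on `[0, 1/n]` and at least `(π - 1) ‖v‖²` on `[1/n, π]`,
where `f` is bounded below by its infimum.
-/

open Real MeasureTheory intervalIntegral Matrix

lemma integral_cos_int_mul (m : ℤ) :
    ∫ x in (0 : ℝ)..π, cos (m * x) = if m = 0 then π else 0 := by
  split_ifs with hm
  · simp [hm]
  · rw [integral_comp_mul_left (fun x => cos x) (Int.cast_ne_zero.2 hm)]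
    simp [integral_cos, sin_int_mul_pi]

lemma integral_neg_self_eq_two_mul {g : ℝ → ℝ} (hg : ∀ x, g (-x) = g x) {a : ℝ}
    (hint : IntervalIntegrable g volume (-a) a) :
    ∫ x in -a..a, g x = 2 * ∫ x in 0..a, g x := by
  have h0 : (0 : ℝ) ∈ Set.uIcc (-a) a := by
    rw [Set.mem_uIcc]
    rcases le_total 0 a with h | h
    · exact Or.inl ⟨by linarith, h⟩
    · exact Or.inr ⟨h, by linarith⟩
  have hleft : ∫ x in -a..0, g x = ∫ x in 0..a, g x := by
    simpa [hg] using (integral_comp_neg (a := 0) (b := a) g).symm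
  rw [← integral_add_adjacent_intervals (hint.mono_set (Set.uIcc_subset_uIcc_left h0))
    (hint.mono_set (Set.uIcc_subset_uIcc_right h0)), hleft, two_mul]

section TrigNormSq

variable {n : ℕ} (v : Fin n → ℝ)

/-- `|∑ⱼ vⱼ e^{ijx}|²`, written through its real and imaginary parts. -/
noncomputable def trigNormSq (x : ℝ) : ℝ :=
  (∑ j, v j * cos (j * x)) ^ 2 + (∑ j, v j * sin (j * x)) ^ 2

lemma continuous_trigNormSq : Continuous (trigNormSq v) := by
  unfold trigNormSq; fun_prop

lemma trigNormSq_nonneg (x : ℝ) : 0 ≤ trigNormSq v x := by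
  unfold trigNormSq; positivity

lemma trigNormSq_neg (x : ℝ) : trigNormSq v (-x) = trigNormSq v x := by
  simp [trigNormSq]

lemma trigNormSq_eq_sum_sum_mul_cos (x : ℝ) :
    trigNormSq v x = ∑ j, ∑ k, v j * v k * cos ((j - k) * x) := by
  rw [trigNormSq, sq, sq, Finset.sum_mul_sum, Finset.sum_mul_sum, ← Finset.sum_add_distrib]
  refine Finset.sum_congr rfl fun j _ => ?_
  rw [← Finset.sum_add_distrib]
  refine Finset.sum_congr rfl fun k _ => ?_
  rw [sub_mul, cos_sub]
  ring

lemma trigNormSq_le (x : ℝ) : trigNormSq v x ≤ n * ∑ j, v j ^ 2 := by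
  calc trigNormSq v x
      ≤ (∑ j, v j ^ 2) * (∑ j : Fin n, cos (j * x) ^ 2)
        + (∑ j, v j ^ 2) * (∑ j : Fin n, sin (j * x) ^ 2) :=
        add_le_add (Finset.sum_mul_sq_le_sq_mul_sq _ _ _)
          (Finset.sum_mul_sq_le_sq_mul_sq _ _ _)
    _ = n * ∑ j, v j ^ 2 := by
        rw [← mul_add, ← Finset.sum_add_distrib]
        simp [cos_sq_add_sin_sq, mul_comm]

lemma integral_trigNormSq_mul {f : ℝ → ℝ} {a b : ℝ} (hf : IntervalIntegrable f volume a b) :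
    ∫ x in a..b, trigNormSq v x * f x
      = ∑ j, ∑ k, v j * v k * ∫ x in a..b, cos ((j - k) * x) * f x := by
  have hint (j k : Fin n) :
      IntervalIntegrable (fun x => v j * v k * (cos ((j - k) * x) * f x)) volume a b :=
    (hf.continuousOn_mul (by fun_prop)).const_mul _
  have hrow (j : Fin n) : IntervalIntegrable
      (fun x => ∑ k, v j * v k * (cos ((j - k) * x) * f x)) volume a b := by
    simpa only [Finset.sum_fn] using IntervalIntegrable.sum _ fun k _ => hint j k
  simp_rw [trigNormSq_eq_sum_sum_mul_cos, Finset.sum_mul, mul_assoc (v _ * v _)]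
  rw [integral_finsetSum fun j _ => hrow j]
  refine Finset.sum_congr rfl fun j _ => ?_
  rw [integral_finsetSum fun k _ => hint j k]
  simp only [intervalIntegral.integral_const_mul]

lemma integral_trigNormSq : ∫ x in (0 : ℝ)..π, trigNormSq v x = π * ∑ j, v j ^ 2 := by
  have hcast (j k : Fin n) : ((j : ℝ) - k) = (((j : ℤ) - k : ℤ) : ℝ) := by push_cast; ring
  have horth (j k : Fin n) : ((j : ℤ) - k = 0) ↔ j = k := by
    rw [sub_eq_zero, Nat.cast_inj, Fin.val_inj]
  have := integral_trigNormSq_mul v (f := fun _ => 1) (a := 0) (b := π) intervalIntegrable_const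
  simp only [mul_one, hcast, integral_cos_int_mul, horth] at this
  rw [this, Finset.mul_sum]
  simp [sq, mul_comm]

lemma integral_trigNormSq_le {δ : ℝ} (hδ : 0 ≤ δ) :
    ∫ x in (0 : ℝ)..δ, trigNormSq v x ≤ δ * (n * ∑ j, v j ^ 2) := by
  refine (integral_mono_on hδ ((continuous_trigNormSq v).intervalIntegrable _ _)
    (intervalIntegrable_const (μ := volume)) fun x _ => trigNormSq_le v x).trans_eq ?_
  simp only [intervalIntegral.integral_const, sub_zero, smul_eq_mul]

lemma mul_le_integral_trigNormSq_mul {f : ℝ → ℝ} {m δ : ℝ} (hδ : 0 ≤ δ) (hδπ : δ ≤ π)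
    (hf : IntervalIntegrable f volume 0 π) (hf_nonneg : ∀ x ∈ Set.Icc 0 δ, 0 ≤ f x)
    (hm : 0 ≤ m) (hfm : ∀ x ∈ Set.Icc δ π, m ≤ f x) :
    m * ((π - δ * n) * ∑ j, v j ^ 2) ≤ ∫ x in (0 : ℝ)..π, trigNormSq v x * f x := by
  have hG := continuous_trigNormSq v
  have hGf : IntervalIntegrable (fun x => trigNormSq v x * f x) volume 0 π :=
    hf.continuousOn_mul hG.continuousOn
  have hδmem : δ ∈ Set.uIcc 0 π := Set.mem_uIcc.2 (Or.inl ⟨hδ, hδπ⟩)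
  have hhead : 0 ≤ ∫ x in (0 : ℝ)..δ, trigNormSq v x * f x :=
    integral_nonneg hδ fun x hx => mul_nonneg (trigNormSq_nonneg v x) (hf_nonneg x hx)
  have htail_mass : (π - δ * n) * ∑ j, v j ^ 2 ≤ ∫ x in δ..π, trigNormSq v x := by
    have := integral_add_adjacent_intervals (hG.intervalIntegrable (μ := volume) 0 δ)
      (hG.intervalIntegrable δ π)
    linarith [integral_trigNormSq v, integral_trigNormSq_le v hδ]
  have htail : m * ∫ x in δ..π, trigNormSq v x ≤ ∫ x in δ..π, trigNormSq v x * f x := by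
    rw [← intervalIntegral.integral_const_mul]
    exact integral_mono_on hδπ ((hG.intervalIntegrable _ _).const_mul m)
      (hGf.mono_set (Set.uIcc_subset_uIcc_right hδmem))
      fun x hx => by
        rw [mul_comm]
        exact mul_le_mul_of_nonneg_left (hfm x hx) (trigNormSq_nonneg v x)
  rw [← integral_add_adjacent_intervals (hGf.mono_set (Set.uIcc_subset_uIcc_left hδmem))
    (hGf.mono_set (Set.uIcc_subset_uIcc_right hδmem))]
  linarith [mul_le_mul_of_nonneg_left htail_mass hm]

lemma dotProduct_toeplitz_mulVec {f : ℝ → ℝ} (hf_even : ∀ x, f (-x) = f x)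
    (hf_int : IntervalIntegrable f volume (-π) π) {C : Matrix (Fin n) (Fin n) ℝ}
    (hC : ∀ j k : Fin n, C j k = (1 / (2 * π)) * ∫ x in (-π)..π, cos ((j - k) * x) * f x) :
    v ⬝ᵥ C *ᵥ v = π⁻¹ * ∫ x in (0 : ℝ)..π, trigNormSq v x * f x := by
  have hGf : IntervalIntegrable (fun x => trigNormSq v x * f x) volume (-π) π :=
    hf_int.continuousOn_mul (continuous_trigNormSq v).continuousOn
  calc v ⬝ᵥ C *ᵥ v
      = (1 / (2 * π)) * ∑ j, ∑ k, v j * v k * ∫ x in (-π)..π, cos ((j - k) * x) * f x := by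
        simp only [dotProduct, mulVec, hC, Finset.mul_sum]
        exact Finset.sum_congr rfl fun j _ => Finset.sum_congr rfl fun k _ => by ring
    _ = (1 / (2 * π)) * (2 * ∫ x in (0 : ℝ)..π, trigNormSq v x * f x) := by
        rw [← integral_trigNormSq_mul v hf_int,
          integral_neg_self_eq_two_mul (fun x => by rw [trigNormSq_neg, hf_even]) hGf]
    _ = π⁻¹ * ∫ x in (0 : ℝ)..π, trigNormSq v x * f x := by
        field_simp

end TrigNormSq

theorem toeplitz_min_eigenvalue_lower_bound_general
    (n : ℕ) (f : ℝ → ℝ)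
    (hf_nonneg : ∀ lam, 0 ≤ f lam)
    (hf_even : ∀ lam, f (-lam) = f lam)
    (hf_int : IntervalIntegrable f volume (-π) π)
    (C : Matrix (Fin n) (Fin n) ℝ)
    (hC : ∀ j k : Fin n,
      C j k = (1 / (2 * π)) * ∫ lam in (-π)..π,
        Real.cos (((j : ℝ) - (k : ℝ)) * lam) * f lam)
    (hHerm : C.IsHermitian) :
    ∀ i : Fin n,
      (1 - 1 / π) * sInf (f '' Set.Icc (1 / (n : ℝ)) π) ≤ hHerm.eigenvalues i := by
  intro i
  set v : Fin n → ℝ := ⇑(hHerm.eigenvectorBasis i)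
  set m := sInf (f '' Set.Icc (1 / (n : ℝ)) π)
  have hn : (1 : ℝ) ≤ n := by exact_mod_cast i.pos
  have hv : ∑ j, v j ^ 2 = 1 := by
    rw [← EuclideanSpace.real_norm_sq_eq, hHerm.eigenvectorBasis.orthonormal.1 i, one_pow]
  have hm : 0 ≤ m := Real.sInf_nonneg (by rintro _ ⟨x, -, rfl⟩; exact hf_nonneg x)
  have hfm : ∀ x ∈ Set.Icc (1 / (n : ℝ)) π, m ≤ f x := fun x hx =>
    csInf_le ⟨0, by rintro _ ⟨y, -, rfl⟩; exact hf_nonneg y⟩ (Set.mem_image_of_mem f hx)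
  have hδπ : 1 / (n : ℝ) ≤ π := by
    linarith [(div_le_one (by positivity)).2 hn, pi_gt_three]
  have hbound := mul_le_integral_trigNormSq_mul v (by positivity) hδπ
    (hf_int.mono_set (Set.uIcc_subset_uIcc (by simp [pi_pos.le]) (by simp)))
    (fun x _ => hf_nonneg x) hm hfm
  rw [one_div_mul_cancel (by positivity), hv] at hbound
  rw [hHerm.eigenvalues_eq i, star_trivial, RCLike.re_to_real,
    dotProduct_toeplitz_mulVec v hf_even hf_int hC]
  calc (1 - 1 / π) * m = π⁻¹ * (m * ((π - 1) * 1)) := by field_simp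
    _ ≤ _ := by gcongr

/-- Lower bound for the smallest eigenvalue of the Toeplitz covariance matrix of a
stationary process with spectral density `f`. -/
theorem toeplitz_min_eigenvalue_lower_bound
    (n : ℕ) (hn : 0 < n) (f : ℝ → ℝ)
    (hf_nonneg : ∀ lam, 0 ≤ f lam)
    (hf_even : ∀ lam, f (-lam) = f lam)
    (hf_int : IntervalIntegrable f volume (-π) π)
    (C : Matrix (Fin n) (Fin n) ℝ)
    (hC : ∀ j k : Fin n,
      C j k = (1 / (2 * π)) * ∫ lam in (-π)..π,
        Real.cos (((j : ℝ) - (k : ℝ)) * lam) * f lam)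
    (hHerm : C.IsHermitian) :
    ∀ i : Fin n,
      (1 - 1 / π) * sInf (f '' Set.Icc (1 / (n : ℝ)) π) ≤ hHerm.eigenvalues i :=
  toeplitz_min_eigenvalue_lower_bound_general n f hf_nonneg hf_even hf_int C hC hHerm
end

section
/- Let H be a reproducing kernel Hilbert space of functions on a set T with kernel K, and let P_f denote the law of the Gaussian shift f + X where X is the centered Gaussian process with covariance K, so that dP_f/dP_0 = exp(Uf − ‖f‖_H²/2) where U is the iso-Gaussian process with E[(Uh)(Ug)] = ⟨h,g⟩_H. Then for f, g ∈ H, the Kullback–Leibler divergence satisfies d_KL(P_f, P_g) = (1/2)‖f − g‖_H². -/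
/-!
Under `P_f` the variable `U h` has moment generating function
`t ↦ exp (-‖f‖²/2) E₀[exp (U (f + t h))] = exp (⟪f, h⟫ t + ‖h‖² t² / 2)`, that of
`N(⟪f, h⟫, ‖h‖²)`; differentiating at `0` gives `E_{P_f}[U h] = ⟪f, h⟫`. The log-likelihood ratio
`log (dP_f / dP_g)` is `U (f - g) + (‖g‖² - ‖f‖²) / 2`, so its `P_f`-mean is
`⟪f, f - g⟫ + (‖g‖² - ‖f‖²) / 2 = ‖f - g‖² / 2`.
-/

open MeasureTheory ProbabilityTheory Real
open scoped NNReal RealInnerProductSpace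

section

variable {H : Type*} [NormedAddCommGroup H] [InnerProductSpace ℝ H]
  {Ω : Type*} [MeasurableSpace Ω] {P₀ : Measure Ω} {U : H →ₗ[ℝ] Ω → ℝ}

structure IsIsoGaussianProcess (P₀ : Measure Ω) (U : H →ₗ[ℝ] Ω → ℝ) : Prop where
  measurable : ∀ h, Measurable (U h)
  map_eq : ∀ h, P₀.map (U h) = gaussianReal 0 (‖h‖₊ ^ 2)

noncomputable def gaussianShift (P₀ : Measure Ω) (U : H →ₗ[ℝ] Ω → ℝ) (f : H) : Measure Ω :=
  P₀.withDensity fun ω => ENNReal.ofReal (exp (U f ω - ‖f‖ ^ 2 / 2))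

lemma integral_gaussianShift {f : H} (hf : Measurable (U f)) (φ : Ω → ℝ) :
    ∫ ω, φ ω ∂gaussianShift P₀ U f = ∫ ω, exp (U f ω - ‖f‖ ^ 2 / 2) * φ ω ∂P₀ := by
  rw [gaussianShift, integral_withDensity_eq_integral_toReal_smul
    (hf.sub_const _).exp.ennreal_ofReal (.of_forall fun _ => ENNReal.ofReal_lt_top)]
  simp only [ENNReal.toReal_ofReal (exp_pos _).le, smul_eq_mul]

namespace IsIsoGaussianProcess

lemma integral_exp (hU : IsIsoGaussianProcess P₀ U) (h : H) :
    ∫ ω, exp (U h ω) ∂P₀ = exp (‖h‖ ^ 2 / 2) := by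
  simpa [mgf] using mgf_gaussianReal (hU.map_eq h) 1

lemma mgf_gaussianShift (hU : IsIsoGaussianProcess P₀ U) (f h : H) :
    mgf (U h) (gaussianShift P₀ U f) = mgf id (gaussianReal ⟪f, h⟫ (‖h‖₊ ^ 2)) := by
  ext t
  have hshift : ∀ ω, exp (U f ω - ‖f‖ ^ 2 / 2) * exp (t * U h ω)
      = exp (-(‖f‖ ^ 2 / 2)) * exp (U (f + t • h) ω) := by
    intro ω
    simp only [map_add, map_smul, Pi.add_apply, Pi.smul_apply, smul_eq_mul, ← exp_add]
    ring_nf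
  rw [mgf_id_gaussianReal, mgf, integral_gaussianShift (hU.measurable f)]
  simp_rw [hshift]
  rw [integral_const_mul, hU.integral_exp, ← exp_add, norm_add_sq_real, real_inner_smul_right,
    norm_smul]
  congr 1
  push_cast
  simp only [norm_eq_abs, mul_pow, sq_abs]
  ring

lemma isProbabilityMeasure_gaussianShift (hU : IsIsoGaussianProcess P₀ U) (f : H) :
    IsProbabilityMeasure (gaussianShift P₀ U f) := by
  have hmass := congrFun (hU.mgf_gaussianShift f 0) 0
  rw [mgf_zero', mgf_zero] at hmass
  exact ⟨(ENNReal.toReal_eq_one_iff _).mp hmass⟩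

lemma integrableExpSet_gaussianShift (hU : IsIsoGaussianProcess P₀ U) (f h : H) :
    integrableExpSet (U h) (gaussianShift P₀ U f) = Set.univ := by
  have := hU.isProbabilityMeasure_gaussianShift f
  rw [integrableExpSet_eq_of_mgf (hU.mgf_gaussianShift f h), integrableExpSet_id_gaussianReal]

lemma integral_gaussianShift_eq_inner (hU : IsIsoGaussianProcess P₀ U) (f h : H) :
    ∫ ω, U h ω ∂gaussianShift P₀ U f = ⟪f, h⟫ := by
  have h0 : (0 : ℝ) ∈ interior (integrableExpSet (U h) (gaussianShift P₀ U f)) := by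
    simp [hU.integrableExpSet_gaussianShift]
  rw [← deriv_mgf_zero h0, hU.mgf_gaussianShift, deriv_mgf_zero (by simp)]
  exact integral_id_gaussianReal

end IsIsoGaussianProcess

end

theorem kl_gaussian_shift_rkhs_general
    {H : Type*} [NormedAddCommGroup H] [InnerProductSpace ℝ H]
    {Ω : Type*} [MeasurableSpace Ω] (P₀ : Measure Ω)
    (U : H →ₗ[ℝ] (Ω → ℝ))
    (hmeas : ∀ h : H, Measurable (U h))
    (hlaw : ∀ h : H, Measure.map (U h) P₀ = gaussianReal 0 (‖h‖₊ ^ 2))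
    (f g : H) :
    ∫ ω, Real.log
        (Real.exp (U f ω - ‖f‖ ^ 2 / 2) / Real.exp (U g ω - ‖g‖ ^ 2 / 2))
      ∂(P₀.withDensity (fun ω => ENNReal.ofReal (Real.exp (U f ω - ‖f‖ ^ 2 / 2))))
      = ‖f - g‖ ^ 2 / 2 := by
  have hU : IsIsoGaussianProcess P₀ U := ⟨hmeas, hlaw⟩
  have := hU.isProbabilityMeasure_gaussianShift f
  have hlog : ∀ ω, log (exp (U f ω - ‖f‖ ^ 2 / 2) / exp (U g ω - ‖g‖ ^ 2 / 2))
      = U (f - g) ω + (‖g‖ ^ 2 / 2 - ‖f‖ ^ 2 / 2) := by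
    intro ω
    rw [← exp_sub, log_exp, map_sub, Pi.sub_apply]
    ring
  change ∫ ω, _ ∂gaussianShift P₀ U f = _
  have hint : Integrable (U (f - g)) (gaussianShift P₀ U f) :=
    integrable_of_mem_interior_integrableExpSet (by rw [hU.integrableExpSet_gaussianShift]; simp)
  simp_rw [hlog]
  rw [integral_add hint (integrable_const _), integral_const, probReal_univ, one_smul,
    hU.integral_gaussianShift_eq_inner, inner_sub_right, real_inner_self_eq_norm_sq,
    norm_sub_sq_real]
  ring

/-- KL divergence between Gaussian shifts `P_f` and `P_g`, where
`dP_f/dP₀ = exp(Uf - ‖f‖²/2)` and `U` is the iso-Gaussian process of the RKHS `H`: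
`d_KL(P_f, P_g) = ‖f - g‖²/2`. -/
theorem kl_gaussian_shift_rkhs
    {H : Type*} [NormedAddCommGroup H] [InnerProductSpace ℝ H]
    {Ω : Type*} [MeasurableSpace Ω] (P₀ : Measure Ω) [IsProbabilityMeasure P₀]
    (U : H →ₗ[ℝ] (Ω → ℝ))
    (hmeas : ∀ h : H, Measurable (U h))
    (hlaw : ∀ h : H, Measure.map (U h) P₀ = gaussianReal 0 (‖h‖₊ ^ 2))
    (f g : H) :
    ∫ ω, Real.log
        (Real.exp (U f ω - ‖f‖ ^ 2 / 2) / Real.exp (U g ω - ‖g‖ ^ 2 / 2))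
      ∂(P₀.withDensity (fun ω => ENNReal.ofReal (Real.exp (U f ω - ‖f‖ ^ 2 / 2))))
      = ‖f - g‖ ^ 2 / 2 :=
  kl_gaussian_shift_rkhs_general P₀ U hmeas hlaw f g
end

section
/- Let H ∈ (0,1), c_H = sin(πH)Γ(2H+1), and μ(dλ) = (c_H/2π)|λ|^{1−2H} dλ. For k ∈ ℤ, the squared L²(μ)-norm of the function λ ↦ e^{2πikλ} restricted via ‖e^{2πik·}‖² := (c_H/2π)∫_{−∞}^{∞} |F(e^{2πik·}𝟙_{[0,1]})(λ)|² |λ|^{1−2H} dλ is finite and of order |k|^{1−2H}: there exist constants 0 < c ≤ C < ∞ depending only on H such that c(1+|k|)^{1−2H} ≤ ‖e^{2πik·}‖² ≤ C(1+|k|)^{1−2H} for all k ∈ ℤ. -/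
/-!
Since `‖∫₀¹ e^{iax} dx‖ = |sinc (a/2)|`, the quantity to estimate is
`∫ sinc ((b - λ)/2)² |λ|^α dλ` with `b = 2πk` and `α = 1 - 2H ∈ (-1, 1)`.

Upper bound: `sinc (a/2)² ≲ (1 + |a|)⁻²`. Split `|λ|^α` into its singular part on
`[-1, 1]`, where `(1 + |b - λ|)⁻² ≲ (1 + |b|)⁻²`, and `(1 + |λ|)^α`; Peetre's inequality
`(1 + |λ|)^α ≤ (1 + |b - λ|)^|α| (1 + |b|)^α` leaves the integrable
`(1 + |b - λ|)^(|α| - 2)`.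

Lower bound: by symmetry `b ≥ 0`; on `[b + 1, b + 2]` we have `sinc ≥ 2/π` and
`λ^α ≍ (1 + b)^α`.

Finally `1 + 2π|k| ≍ 1 + |k|`.
-/

open Real MeasureTheory Complex

theorem norm_intervalIntegral_exp_I_mul (a : ℝ) :
    ‖∫ x in (0:ℝ)..1, exp (I * a * x)‖ = |sinc (a / 2)| := by
  rcases eq_or_ne a 0 with rfl | ha
  · simp
  · have hIa : I * (a : ℂ) ≠ 0 := mul_ne_zero I_ne_zero (ofReal_ne_zero.2 ha)
    rw [integral_exp_mul_complex hIa, sinc_of_ne_zero (div_ne_zero ha two_ne_zero)]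
    simp only [ofReal_one, mul_one, ofReal_zero, mul_zero, Complex.exp_zero]
    rw [norm_div, norm_exp_I_mul_ofReal_sub_one, norm_mul, norm_mul, norm_I, norm_real,
      Real.norm_eq_abs, Real.norm_eq_abs, Real.norm_eq_abs, abs_div, abs_div, abs_two, one_mul]
    field_simp

lemma sinc_half_sq_le (a : ℝ) : sinc (a / 2) ^ 2 ≤ 16 * (1 + |a|) ^ (-2 : ℝ) := by
  rw [rpow_neg (by positivity), rpow_two, ← div_eq_mul_inv, le_div_iff₀ (by positivity)]
  rcases le_or_gt |a| 2 with ha | ha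
  · have h1 : sinc (a / 2) ^ 2 ≤ 1 := by
      rw [← sq_abs]; exact pow_le_one₀ (abs_nonneg _) (abs_sinc_le_one _)
    have h2 : (1 + |a|) ^ 2 ≤ 16 := by nlinarith [abs_nonneg a]
    nlinarith [sq_nonneg (sinc (a / 2))]
  · have ha0 : a ≠ 0 := by rintro rfl; norm_num at ha
    rw [sinc_of_ne_zero (div_ne_zero ha0 two_ne_zero), div_pow, div_mul_eq_mul_div,
      div_le_iff₀ (by positivity), div_pow, ← sq_abs a]
    nlinarith [sin_sq_le_one (a / 2), abs_nonneg a]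

lemma two_div_pi_le_sinc {x : ℝ} (hx : |x| ≤ π / 2) : 2 / π ≤ sinc x := by
  wlog h0 : 0 ≤ x generalizing x
  · simpa using this (x := -x) (by rwa [abs_neg]) (by linarith)
  rcases h0.eq_or_lt with rfl | hpos
  · rw [sinc_zero, div_le_one pi_pos]; linarith [pi_gt_three]
  · rw [sinc_of_ne_zero hpos.ne', le_div_iff₀ hpos]
    exact mul_le_sin h0 (by rwa [abs_of_nonneg h0] at hx)

lemma rpow_le_rpow_abs_mul_rpow {x y c : ℝ} (hx : 0 < x) (hy : 0 < y) (hxy : x ≤ c * y)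
    (hyx : y ≤ c * x) (s : ℝ) : x ^ s ≤ c ^ |s| * y ^ s := by
  have hc : 0 < c := pos_of_mul_pos_left (hx.trans_le hxy) hy.le
  rcases le_total 0 s with hs | hs
  · rw [abs_of_nonneg hs, ← mul_rpow hc.le hy.le]
    exact rpow_le_rpow hx.le hxy hs
  · rw [abs_of_nonpos hs, rpow_neg hc.le, ← div_eq_inv_mul, ← div_rpow hy.le hc.le]
    exact rpow_le_rpow_of_nonpos (div_pos hy hc) (div_le_of_le_mul₀ hc.le hx.le (by linarith)) hs

/-- Peetre's inequality. -/
lemma one_add_abs_rpow_le (s x y : ℝ) :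
    (1 + |x|) ^ s ≤ (1 + |x - y|) ^ |s| * (1 + |y|) ^ s := by
  have hxy := abs_sub_abs_le_abs_sub x y
  have hyx := abs_sub_abs_le_abs_sub y x
  rw [abs_sub_comm] at hyx
  apply rpow_le_rpow_abs_mul_rpow (by positivity) (by positivity) <;>
    nlinarith [abs_nonneg x, abs_nonneg y, abs_nonneg (x - y)]

lemma one_add_abs_mul_rpow_le {a : ℝ} (ha : 1 ≤ a) (s t : ℝ) :
    (1 + |a * t|) ^ s ≤ a ^ |s| * (1 + |t|) ^ s := by
  have hat : |t| ≤ a * |t| := le_mul_of_one_le_left (abs_nonneg t) ha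
  rw [abs_mul, abs_of_nonneg (show 0 ≤ a by linarith)]
  exact rpow_le_rpow_abs_mul_rpow (by positivity) (by positivity)
    (by nlinarith [abs_nonneg t]) (by nlinarith [abs_nonneg t]) s

lemma one_add_abs_rpow_le_mul {a : ℝ} (ha : 1 ≤ a) (s t : ℝ) :
    (1 + |t|) ^ s ≤ a ^ |s| * (1 + |a * t|) ^ s := by
  have hat : |t| ≤ a * |t| := le_mul_of_one_le_left (abs_nonneg t) ha
  rw [abs_mul, abs_of_nonneg (show 0 ≤ a by linarith)]
  exact rpow_le_rpow_abs_mul_rpow (by positivity) (by positivity)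
    (by nlinarith [abs_nonneg t]) (by nlinarith [abs_nonneg t]) s

lemma rpow_abs_le_indicator_add (α x : ℝ) :
    |x| ^ α ≤ (Set.Icc (-1) 1).indicator (fun y => |y| ^ α) x + 2 ^ |α| * (1 + |x|) ^ α := by
  by_cases hx : x ∈ Set.Icc (-1) 1
  · rw [Set.indicator_of_mem hx]
    have : 0 ≤ 2 ^ |α| * (1 + |x|) ^ α := by positivity
    linarith
  · have h1 : 1 < |x| := by
      by_contra! h
      exact hx (abs_le.1 h)
    rw [Set.indicator_of_notMem hx, zero_add]
    exact rpow_le_rpow_abs_mul_rpow (c := 2) (by linarith) (by linarith) (by linarith)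
      (by linarith) α

lemma one_add_abs_sub_rpow_neg_two_mul_le (α b x : ℝ) :
    (1 + |b - x|) ^ (-2 : ℝ) * (1 + |x|) ^ α ≤
      (1 + |b|) ^ α * (1 + |b - x|) ^ (|α| - 2) := by
  have hpeetre := one_add_abs_rpow_le α x b
  rw [abs_sub_comm x b] at hpeetre
  calc (1 + |b - x|) ^ (-2 : ℝ) * (1 + |x|) ^ α
      ≤ (1 + |b - x|) ^ (-2 : ℝ) * ((1 + |b - x|) ^ |α| * (1 + |b|) ^ α) := by gcongr
    _ = (1 + |b|) ^ α * (1 + |b - x|) ^ (|α| - 2) := by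
      rw [show |α| - 2 = -2 + |α| by ring, rpow_add (by positivity)]; ring

section

variable {α : ℝ}

lemma one_add_abs_sub_rpow_neg_two_le (hα : -2 ≤ α) {b x : ℝ} (hx : |x| ≤ 1) :
    (1 + |b - x|) ^ (-2 : ℝ) ≤ 4 * (1 + |b|) ^ α := by
  have hpeetre := one_add_abs_rpow_le (-2) (b - x) b
  rw [show b - x - b = -x by ring, abs_neg, abs_neg, abs_two, rpow_two] at hpeetre
  calc (1 + |b - x|) ^ (-2 : ℝ) ≤ (1 + |x|) ^ 2 * (1 + |b|) ^ (-2 : ℝ) := hpeetre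
    _ ≤ 4 * (1 + |b|) ^ α := by
      gcongr
      · nlinarith [abs_nonneg x]
      · linarith [abs_nonneg b]

lemma one_add_abs_sub_rpow_mul_le (hα : -2 ≤ α) (b x : ℝ) :
    (1 + |b - x|) ^ (-2 : ℝ) * |x| ^ α ≤
      (1 + |b|) ^ α * (4 * (Set.Icc (-1) 1).indicator (fun y => |y| ^ α) x +
        2 ^ |α| * (1 + |b - x|) ^ (|α| - 2)) := by
  have hnear : (1 + |b - x|) ^ (-2 : ℝ) * (Set.Icc (-1) 1).indicator (fun y => |y| ^ α) x ≤
      4 * (1 + |b|) ^ α * (Set.Icc (-1) 1).indicator (fun y => |y| ^ α) x := by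
    by_cases hx : x ∈ Set.Icc (-1) 1
    · exact mul_le_mul_of_nonneg_right (one_add_abs_sub_rpow_neg_two_le hα (abs_le.2 hx))
        (Set.indicator_nonneg (fun y _ => by positivity) x)
    · simp [Set.indicator_of_notMem hx]
  have hfar := mul_le_mul_of_nonneg_left (one_add_abs_sub_rpow_neg_two_mul_le α b x)
    (by positivity : (0 : ℝ) ≤ 2 ^ |α|)
  calc (1 + |b - x|) ^ (-2 : ℝ) * |x| ^ α
      ≤ (1 + |b - x|) ^ (-2 : ℝ) * ((Set.Icc (-1) 1).indicator (fun y => |y| ^ α) x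
          + 2 ^ |α| * (1 + |x|) ^ α) := by gcongr; exact rpow_abs_le_indicator_add α x
    _ ≤ _ := by linarith

lemma integrable_indicator_Icc_rpow_abs (hα : -1 < α) :
    Integrable ((Set.Icc (-1 : ℝ) 1).indicator (fun y => |y| ^ α)) := by
  refine ((locallyIntegrable_of_norm_le_rpow (C := 1) (α := -α) (by simp) (by simp; linarith)
    (ae_of_all _ fun y => ?_) (Measurable.aestronglyMeasurable (by fun_prop)))
      |>.integrableOn_isCompact isCompact_Icc).integrable_indicator measurableSet_Icc
  rw [neg_neg, one_mul, Real.norm_eq_abs, abs_of_nonneg (by positivity), Real.norm_eq_abs]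

lemma integrable_one_add_abs_sub_rpow {s : ℝ} (hs : s < -1) (b : ℝ) :
    Integrable (fun x : ℝ => (1 + |b - x|) ^ s) := by
  simpa using (integrable_one_add_norm (E := ℝ) (μ := volume) (r := -s)
    (by simp; linarith)).comp_sub_left b

lemma integrable_one_add_abs_sub_rpow_mul_majorant (hα : |α| < 1) (b : ℝ) :
    Integrable (fun x => (1 + |b|) ^ α * (4 * (Set.Icc (-1) 1).indicator (fun y => |y| ^ α) x +
        2 ^ |α| * (1 + |b - x|) ^ (|α| - 2))) :=
  (((integrable_indicator_Icc_rpow_abs (abs_lt.1 hα).1).const_mul 4).add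
    ((integrable_one_add_abs_sub_rpow (by linarith) b).const_mul _)).const_mul _

theorem integrable_one_add_abs_sub_rpow_mul (hα : |α| < 1) (b : ℝ) :
    Integrable (fun x => (1 + |b - x|) ^ (-2 : ℝ) * |x| ^ α) := by
  refine (integrable_one_add_abs_sub_rpow_mul_majorant hα b).mono' (by fun_prop)
    (ae_of_all _ fun x => ?_)
  rw [Real.norm_eq_abs, abs_of_nonneg (by positivity)]
  exact one_add_abs_sub_rpow_mul_le (by linarith [(abs_lt.1 hα).1]) b x

theorem integral_one_add_abs_sub_rpow_mul_le (hα : |α| < 1) (b : ℝ) :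
    ∫ x, (1 + |b - x|) ^ (-2 : ℝ) * |x| ^ α ≤
      (4 * (∫ y in Set.Icc (-1) 1, |y| ^ α) + 2 ^ |α| * ∫ y, (1 + |y|) ^ (|α| - 2)) *
        (1 + |b|) ^ α := by
  calc ∫ x, (1 + |b - x|) ^ (-2 : ℝ) * |x| ^ α
      ≤ ∫ x, (1 + |b|) ^ α * (4 * (Set.Icc (-1) 1).indicator (fun y => |y| ^ α) x +
          2 ^ |α| * (1 + |b - x|) ^ (|α| - 2)) :=
        integral_mono (integrable_one_add_abs_sub_rpow_mul hα b)
          (integrable_one_add_abs_sub_rpow_mul_majorant hα b)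
          (one_add_abs_sub_rpow_mul_le (by linarith [(abs_lt.1 hα).1]) b)
    _ = _ := by
      rw [integral_const_mul,
        integral_add ((integrable_indicator_Icc_rpow_abs (abs_lt.1 hα).1).const_mul 4)
          ((integrable_one_add_abs_sub_rpow (by linarith) b).const_mul _),
        integral_const_mul, integral_const_mul, integral_indicator measurableSet_Icc,
        integral_sub_left_eq_self (fun y => (1 + |y|) ^ (|α| - 2))]
      ring

theorem integrable_sinc_sq_mul_rpow_abs (hα : |α| < 1) (b : ℝ) :
    Integrable (fun x => sinc ((b - x) / 2) ^ 2 * |x| ^ α) := by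
  refine ((integrable_one_add_abs_sub_rpow_mul hα b).const_mul 16).mono'
    (Measurable.aestronglyMeasurable (by fun_prop)) (ae_of_all _ fun x => ?_)
  rw [Real.norm_eq_abs, abs_of_nonneg (by positivity), ← mul_assoc]
  gcongr
  exact sinc_half_sq_le _

theorem exists_integral_sinc_sq_mul_rpow_abs_le (hα : |α| < 1) :
    ∃ C, 0 ≤ C ∧ ∀ b : ℝ,
      ∫ x, sinc ((b - x) / 2) ^ 2 * |x| ^ α ≤ C * (1 + |b|) ^ α := by
  refine ⟨16 * (4 * (∫ y in Set.Icc (-1) 1, |y| ^ α) +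
    2 ^ |α| * ∫ y, (1 + |y|) ^ (|α| - 2)), by positivity, fun b => ?_⟩
  calc ∫ x, sinc ((b - x) / 2) ^ 2 * |x| ^ α
      ≤ ∫ x, 16 * ((1 + |b - x|) ^ (-2 : ℝ) * |x| ^ α) :=
        integral_mono (integrable_sinc_sq_mul_rpow_abs hα b)
          ((integrable_one_add_abs_sub_rpow_mul hα b).const_mul 16) fun x => by
            rw [← mul_assoc]; gcongr; exact sinc_half_sq_le _
    _ ≤ _ := by
      rw [integral_const_mul, mul_assoc]
      gcongr
      exact integral_one_add_abs_sub_rpow_mul_le hα b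

theorem le_integral_sinc_sq_mul_rpow_abs (hα : |α| < 1) (b : ℝ) :
    4 / π ^ 2 / 2 ^ |α| * (1 + |b|) ^ α ≤ ∫ x, sinc ((b - x) / 2) ^ 2 * |x| ^ α := by
  wlog hb : 0 ≤ b generalizing b
  · have := this (-b) (by linarith)
    rw [abs_neg, ← integral_neg_eq_self] at this
    simpa only [abs_neg, show ∀ x, (-b - -x) / 2 = -((b - x) / 2) by intro; ring, sinc_neg]
      using this
  have hpt : ∀ x ∈ Set.Icc (b + 1) (b + 2),
      4 / π ^ 2 / 2 ^ |α| * (1 + |b|) ^ α ≤ sinc ((b - x) / 2) ^ 2 * |x| ^ α := by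
    rintro x ⟨hx1, hx2⟩
    have hsinc : 2 / π ≤ sinc ((b - x) / 2) :=
      two_div_pi_le_sinc (by rw [abs_le]; constructor <;> linarith [pi_gt_three])
    have hpow : (1 + |b|) ^ α ≤ 2 ^ |α| * |x| ^ α := by
      rw [abs_of_nonneg hb, abs_of_pos (show 0 < x by linarith)]
      exact rpow_le_rpow_abs_mul_rpow (c := 2) (by linarith) (by linarith) (by linarith)
        (by linarith) α
    calc 4 / π ^ 2 / 2 ^ |α| * (1 + |b|) ^ α
        = (2 / π) ^ 2 * ((1 + |b|) ^ α / 2 ^ |α|) := by ring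
      _ ≤ sinc ((b - x) / 2) ^ 2 * |x| ^ α := by
        gcongr
        rwa [div_le_iff₀' (by positivity)]
  calc 4 / π ^ 2 / 2 ^ |α| * (1 + |b|) ^ α
      ≤ ∫ x in Set.Icc (b + 1) (b + 2), sinc ((b - x) / 2) ^ 2 * |x| ^ α := by
        have := setIntegral_ge_of_const_le_real measurableSet_Icc (by simp) hpt
          (integrable_sinc_sq_mul_rpow_abs hα b).integrableOn
        rwa [Real.volume_real_Icc_of_le (by linarith), show b + 2 - (b + 1) = 1 by ring,
          mul_one] at this
    _ ≤ ∫ x, sinc ((b - x) / 2) ^ 2 * |x| ^ α :=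
        setIntegral_le_integral (integrable_sinc_sq_mul_rpow_abs hα b)
          (ae_of_all _ fun x => by positivity)

end

/-- The squared `L²(μ)`-norm of `t ↦ e^{2πikt}` on `[0,1]` under the fBM spectral
measure `μ(dλ) = (c_H/2π)|λ|^{1-2H}dλ` is finite and of exact order `(1+|k|)^{1-2H}`. -/
theorem exp_spectral_norm_order
    (H : ℝ) (hH : H ∈ Set.Ioo (0:ℝ) 1) :
    ∃ c C : ℝ, 0 < c ∧ c ≤ C ∧
      ∀ k : ℤ,
        Integrable (fun lam : ℝ =>
          ‖(∫ x in (0:ℝ)..1,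
            Complex.exp (Complex.I * (2 * π * (k : ℝ) - lam) * x))‖ ^ 2 *
              |lam| ^ (1 - 2 * H)) ∧
        c * (1 + |(k : ℝ)|) ^ (1 - 2 * H) ≤
          (Real.sin (π * H) * Real.Gamma (2 * H + 1) / (2 * π)) *
            ∫ lam : ℝ,
              ‖(∫ x in (0:ℝ)..1,
                Complex.exp (Complex.I * (2 * π * (k : ℝ) - lam) * x))‖ ^ 2 *
                  |lam| ^ (1 - 2 * H) ∧
        (Real.sin (π * H) * Real.Gamma (2 * H + 1) / (2 * π)) *
            (∫ lam : ℝ,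
              ‖(∫ x in (0:ℝ)..1,
                Complex.exp (Complex.I * (2 * π * (k : ℝ) - lam) * x))‖ ^ 2 *
                  |lam| ^ (1 - 2 * H)) ≤
          C * (1 + |(k : ℝ)|) ^ (1 - 2 * H) := by
  obtain ⟨hH0, hH1⟩ := hH
  have hα : |1 - 2 * H| < 1 := abs_lt.2 ⟨by linarith, by linarith⟩
  have hcH : 0 < Real.sin (π * H) * Real.Gamma (2 * H + 1) / (2 * π) :=
    div_pos (mul_pos (sin_pos_of_pos_of_lt_pi (by positivity) (by nlinarith [pi_pos]))
      (Gamma_pos_of_pos (by linarith))) (by positivity)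
  have hsinc (k : ℤ) (lam : ℝ) :
      ‖∫ x in (0:ℝ)..1, Complex.exp (Complex.I * (2 * π * (k : ℝ) - lam) * x)‖ ^ 2 =
        sinc ((2 * π * k - lam) / 2) ^ 2 := by
    rw [← sq_abs (sinc _), ← norm_intervalIntegral_exp_I_mul]
    push_cast
    rfl
  obtain ⟨C, hC0, hC⟩ := exists_integral_sinc_sq_mul_rpow_abs_le hα
  set cH := Real.sin (π * H) * Real.Gamma (2 * H + 1) / (2 * π)
  set α := 1 - 2 * H
  set c₀ := 4 / π ^ 2 / 2 ^ |α|
  have h2π : 1 ≤ 2 * π := by linarith [pi_gt_three]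
  refine ⟨cH * c₀ / (2 * π) ^ |α|,
    max (cH * c₀ / (2 * π) ^ |α|) (cH * C * (2 * π) ^ |α|),
    by positivity, le_max_left _ _, fun k => ?_⟩
  simp only [hsinc k]
  refine ⟨integrable_sinc_sq_mul_rpow_abs hα _, ?_, ?_⟩
  · calc cH * c₀ / (2 * π) ^ |α| * (1 + |(k : ℝ)|) ^ α
        ≤ cH * c₀ / (2 * π) ^ |α| *
            ((2 * π) ^ |α| * (1 + |2 * π * (k : ℝ)|) ^ α) := by
          gcongr; exact one_add_abs_rpow_le_mul h2π α k
      _ = cH * (c₀ * (1 + |2 * π * (k : ℝ)|) ^ α) := by field_simp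
      _ ≤ _ := by gcongr; exact le_integral_sinc_sq_mul_rpow_abs hα _
  · calc cH * ∫ lam, sinc ((2 * π * k - lam) / 2) ^ 2 * |lam| ^ α
        ≤ cH * (C * (1 + |2 * π * (k : ℝ)|) ^ α) := by gcongr; exact hC _
      _ ≤ cH * (C * ((2 * π) ^ |α| * (1 + |(k : ℝ)|) ^ α)) := by
          gcongr; exact one_add_abs_mul_rpow_le h2π α k
      _ = cH * C * (2 * π) ^ |α| * (1 + |(k : ℝ)|) ^ α := by ring
      _ ≤ _ := by gcongr; exact le_max_right _ _
end
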